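/- For the three-qubit W state |W₃⟩ = (|001⟩+|010⟩+|100⟩)/√3, the operator Σ_k (1/3) 𝒫_k{ P_Z⁺ ⊗ ((1/2)P_{XX}⁺ + (1/2)P_{YY}⁺) + P_Z⁻ ⊗ ((1/2)I⊗I + (1/2)P_Z⁺⊗P_Z⁺) } equals (1/2)I + (1/2)|W₃⟩⟨W₃|, where the sum runs over the three cyclic positions k = 1,2,3 of the distinguished qubit and 𝒫_k permutes the tensor factors accordingly. -/
import Mathlib


open Matrix

/-- The three-qubit operator A₁⊗A₂⊗A₃ on (ℂ²)^⊗3 indexed by Fin 2 × Fin 2 × Fin 2. -/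
noncomputable def op3 (A B C : Matrix (Fin 2) (Fin 2) ℂ) :
    Matrix (Fin 2 × Fin 2 × Fin 2) (Fin 2 × Fin 2 × Fin 2) ℂ :=
  fun x y => A x.1 y.1 * B x.2.1 y.2.1 * C x.2.2 y.2.2

set_option maxHeartbeats 4000000 in
/-- The adaptive homogeneous protocol for |W₃⟩:
(1/3)Σₖ 𝒫ₖ{P_Z⁺⊗((1/2)P_{XX}⁺+(1/2)P_{YY}⁺) + P_Z⁻⊗((1/2)I⊗I+(1/2)P_Z⁺⊗P_Z⁺)}
equals (1/2)I + (1/2)|W₃⟩⟨W₃|. -/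
theorem stmt_15 :
    let X : Matrix (Fin 2) (Fin 2) ℂ := !![0, 1; 1, 0]
    let Y : Matrix (Fin 2) (Fin 2) ℂ := !![0, -Complex.I; Complex.I, 0]
    let Z : Matrix (Fin 2) (Fin 2) ℂ := !![1, 0; 0, -1]
    let Pp : Matrix (Fin 2) (Fin 2) ℂ := (2 : ℂ)⁻¹ • (1 + Z)
    let Pm : Matrix (Fin 2) (Fin 2) ℂ := (2 : ℂ)⁻¹ • (1 - Z)
    let w : Fin 2 × Fin 2 × Fin 2 → ℂ := fun q =>
      if q = (0, 0, 1) ∨ q = (0, 1, 0) ∨ q = (1, 0, 0)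
      then ((Real.sqrt 3 : ℝ) : ℂ)⁻¹ else 0
    let T1 := (2 : ℂ)⁻¹ • op3 Pp 1 1 + (4 : ℂ)⁻¹ • op3 Pp X X + (4 : ℂ)⁻¹ • op3 Pp Y Y
      + (2 : ℂ)⁻¹ • op3 Pm 1 1 + (2 : ℂ)⁻¹ • op3 Pm Pp Pp
    let T2 := (2 : ℂ)⁻¹ • op3 1 Pp 1 + (4 : ℂ)⁻¹ • op3 X Pp X + (4 : ℂ)⁻¹ • op3 Y Pp Y
      + (2 : ℂ)⁻¹ • op3 1 Pm 1 + (2 : ℂ)⁻¹ • op3 Pp Pm Pp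
    let T3 := (2 : ℂ)⁻¹ • op3 1 1 Pp + (4 : ℂ)⁻¹ • op3 X X Pp + (4 : ℂ)⁻¹ • op3 Y Y Pp
      + (2 : ℂ)⁻¹ • op3 1 1 Pm + (2 : ℂ)⁻¹ • op3 Pp Pp Pm
    (3 : ℂ)⁻¹ • (T1 + T2 + T3)
      = (2 : ℂ)⁻¹ • (1 : Matrix (Fin 2 × Fin 2 × Fin 2) (Fin 2 × Fin 2 × Fin 2) ℂ)
        + (2 : ℂ)⁻¹ • vecMulVec w (star w) := by
  have h3 : (((Real.sqrt 3 : ℝ) : ℂ))⁻¹ * (((Real.sqrt 3 : ℝ) : ℂ))⁻¹ = (3:ℂ)⁻¹ := by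
    rw [← Complex.ofReal_inv, ← Complex.ofReal_mul,
      ← Real.sqrt_inv, Real.mul_self_sqrt (by norm_num)]
    norm_num
  intro X Y Z Pp Pm w T1 T2 T3
  ext ⟨a,b,c⟩ ⟨d,e,f⟩
  simp only [T1, T2, T3, w, op3, Pp, Pm, X, Y, Z, Matrix.add_apply, Matrix.smul_apply,
    Matrix.one_apply, Matrix.sub_apply, vecMulVec_apply, Pi.star_apply, smul_eq_mul]
  fin_cases a <;> fin_cases b <;> fin_cases c <;> fin_cases d <;> fin_cases e <;> fin_cases f <;>
    norm_num [Prod.ext_iff, h3]
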